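/- Let A = (Q, Σ, δ, s, F) be a DFA in which the initial state s has no incoming transitions and every state is reachable from s, and let u ∈ Q. If γ ∈ {inf I_u, sup I_u} has infinite length, then γ = β^ω α for some finite strings α, β ∈ Σ* with |α| + |β| < |Q|, where β^ω denotes the left-infinite concatenation of infinitely many copies of β. -/

import Mathlib

/-- A (possibly left-infinite) string over alphabet `A`, indexed from the END:
`f i` is the `i`-th character from the right, and `⊥` means the position is
past the beginning of the string.  The elements of `Σ* ∪ Σ^ω` are the
well-formed (`CStr.WF`) such functions. -/
abbrev CStr (A : Type*) := ℕ → WithBot A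

/-- Well-formed: once we run out of characters going leftwards, it stays so. -/
def CStr.WF {A : Type*} (f : CStr A) : Prop := ∀ i, f i = ⊥ → f (i + 1) = ⊥

/-- The string is finite (an element of `Σ*`). -/
def CStr.Finite {A : Type*} (f : CStr A) : Prop := ∃ i, f i = ⊥

/-- Length of a finite string. -/
noncomputable def CStr.length {A : Type*} (f : CStr A) : ℕ := sInf {i | f i = ⊥}

/-- A finite string, given as a list read left-to-right, viewed as a `CStr`. -/
def CStr.ofList {A : Type*} (w : List A) : CStr A := fun i =>
  if h : i < w.length then (w.get ⟨w.length - 1 - i, by omega⟩ : WithBot A) else ⊥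

/-- The co-lexicographic (strict) order on `Σ* ∪ Σ^ω`: compare the last
characters first (position `0`), a missing character (`⊥`) being smaller
than every character of the alphabet. -/
def colexLt {A : Type*} [LinearOrder A] (f g : CStr A) : Prop :=
  ∃ i, (∀ j, j < i → f j = g j) ∧ f i < g i

/-- The non-strict co-lex order. -/
def colexLe {A : Type*} [LinearOrder A] (f g : CStr A) : Prop := colexLt f g ∨ f = g

/-- `g` is the greatest lower bound (infimum) of `S` in `(Σ* ∪ Σ^ω, ≤)`. -/
def IsColexGLB {A : Type*} [LinearOrder A] (S : Set (CStr A)) (g : CStr A) : Prop :=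
  g.WF ∧ (∀ f ∈ S, colexLe g f) ∧ ∀ h, CStr.WF h → (∀ f ∈ S, colexLe h f) → colexLe h g

/-- `g` is the least upper bound (supremum) of `S` in `(Σ* ∪ Σ^ω, ≤)`. -/
def IsColexLUB {A : Type*} [LinearOrder A] (S : Set (CStr A)) (g : CStr A) : Prop :=
  g.WF ∧ (∀ f ∈ S, colexLe f g) ∧ ∀ h, CStr.WF h → (∀ f ∈ S, colexLe f h) → colexLe g h

/-- A DFA `(Q, A, δ, start, accept)` with a partial transition function. -/
structure PDFA (A Q : Type*) where
  δ : Q → A → Option Q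
  start : Q
  accept : Set Q

/-- The transition function extended to finite strings (read left-to-right). -/
def PDFA.δStar {A Q : Type*} (M : PDFA A Q) : Q → List A → Option Q
  | q, [] => some q
  | q, a :: w => (M.δ q a).bind fun q' => M.δStar q' w

/-- `I_u`: the set of finite strings reaching `u` from the initial state. -/
def PDFA.I {A Q : Type*} (M : PDFA A Q) (u : Q) : Set (List A) :=
  {w | M.δStar M.start w = some u}

/-- The initial state has no incoming transitions. -/
def PDFA.NoIncomingStart {A Q : Type*} (M : PDFA A Q) : Prop :=
  ∀ v a, M.δ v a ≠ some M.start

/-- Every state is reachable from the initial state. -/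
def PDFA.Reachable {A Q : Type*} (M : PDFA A Q) : Prop :=
  ∀ u, ∃ w : List A, M.δStar M.start w = some u

/-- Input consistency: all transitions entering a state `u` carry the same
label `lam u`. -/
def PDFA.InputConsistent {A Q : Type*} (M : PDFA A Q) (lam : Q → A) : Prop :=
  ∀ v a u, M.δ v a = some u → lam u = a

/-- The maximum co-lex order `<_A` on the states of a DFA:
`u <_A v` iff `α < β` for every `α ∈ I_u` and every `β ∈ I_v`. -/
def PDFA.colexStateLt {A Q : Type*} [LinearOrder A] (M : PDFA A Q) (u v : Q) : Prop :=
  ∀ α ∈ M.I u, ∀ β ∈ M.I v, colexLt (CStr.ofList α) (CStr.ofList β)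

/-- `suf_k`: the length-`k` suffix of a string; positions `≥ k` are cut off.
(The `⊥` entries at positions `< k` play the role of the left-padding symbol
`#`, which is smaller than every character of the alphabet.) -/
def CStr.suf {A : Type*} (k : ℕ) (f : CStr A) : CStr A := fun i => if i < k then f i else ⊥

/-- `β^ω · α` : the left-infinite string obtained by concatenating infinitely
many copies of `β`, followed (at the right end) by `α`. -/
def CStr.omegaAppend {A : Type*} (b a : List A) : CStr A := fun i =>
  if i < a.length then CStr.ofList a i
  else CStr.ofList b ((i - a.length) % b.length)

/-- Appending one character at the (right) end of a possibly infinite string. -/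
def CStr.snoc {A : Type*} (f : CStr A) (a : A) : CStr A := fun i =>
  match i with
  | 0 => (a : WithBot A)
  | Nat.succ j => f j

/-- Removing the last `k` characters of a string. -/
def CStr.drop {A : Type*} (f : CStr A) (k : ℕ) : CStr A := fun i => f (i + k)

/-- `suf_m(x)` is a prefix of `suf_{2m}(y)`. -/
def ExtPrefix {A : Type*} (x y : CStr A) (m : ℕ) : Prop := ∀ j, j < m → x j = y (m + j)

/-- The set of extenders of `u` at distance `m` (used with `m = 2^k`), where
`g u` denotes the infimum string `inf I_u`:
`P(u) = {v ∈ Q : δ(v, suf_m(inf I_u)) = u ∧ suf_m(inf I_v) is a prefix of suf_{2m}(inf I_u)}`.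
(The first condition is expressed by exhibiting the genuine length-`m` word
`w = suf_m(inf I_u)` over the alphabet; if `inf I_u` is shorter than `m`, the
padded suffix contains `#` and no state can read it, as `# ∉ Σ`.) -/
def PDFA.Pset {A Q : Type*} (M : PDFA A Q) (g : Q → CStr A) (m : ℕ) (u : Q) : Set Q :=
  {v | (∃ w : List A, w.length = m ∧ (∀ j, j < m → CStr.ofList w j = g u j) ∧
          M.δStar v w = some u) ∧ ExtPrefix (g v) (g u) m}

section Helpers

variable {A : Type*}

lemma CStr.ofList_eq_bot_iff (w : List A) (m : ℕ) :
    CStr.ofList w m = ⊥ ↔ w.length ≤ m := by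
  unfold CStr.ofList
  split
  · rename_i h
    simp only [WithBot.coe_ne_bot, false_iff]
    omega
  · rename_i h
    simp only [true_iff]
    omega

lemma CStr.ofList_wf (w : List A) : (CStr.ofList w).WF := by
  intro i hi
  rw [CStr.ofList_eq_bot_iff] at hi ⊢
  omega

lemma CStr.ofList_finite (w : List A) : (CStr.ofList w).Finite :=
  ⟨w.length, by rw [CStr.ofList_eq_bot_iff]⟩

lemma CStr.wf_bot_mono {f : CStr A} (hf : f.WF) {i j : ℕ} (h : f i = ⊥) (hij : i ≤ j) :
    f j = ⊥ := by
  induction j with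
  | zero => exact Nat.le_zero.mp hij ▸ h
  | succ j ih =>
    rcases Nat.lt_or_ge j i with h1 | h1
    · have : i = j + 1 := by omega
      exact this ▸ h
    · exact hf j (ih h1)

lemma CStr.ofList_eq_getElem (w : List A) (m : ℕ) (h : m < w.length) :
    CStr.ofList w m = (w[w.length - 1 - m] : A) := by
  unfold CStr.ofList
  rw [dif_pos h]
  rfl

lemma CStr.ofList_append_left (x y : List A) (m : ℕ) (h : m < y.length) :
    CStr.ofList (x ++ y) m = CStr.ofList y m := by
  have h2 : m < (x ++ y).length := by simp; omega
  rw [CStr.ofList_eq_getElem _ _ h2, CStr.ofList_eq_getElem _ _ h]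
  congr 1
  rw [List.getElem_append_right (by simp; omega)]
  congr 1
  simp; omega

lemma CStr.ofList_append_right (x y : List A) (m : ℕ) (h1 : y.length ≤ m)
    (h2 : m < x.length + y.length) :
    CStr.ofList (x ++ y) m = CStr.ofList x (m - y.length) := by
  have h3 : m < (x ++ y).length := by simp; omega
  rw [CStr.ofList_eq_getElem _ _ h3, CStr.ofList_eq_getElem _ _ (by omega)]
  simp only [List.length_append]
  have hidx : x.length + y.length - 1 - m = x.length - 1 - (m - y.length) := by omega
  rw [List.getElem_append_left (by omega) (h' := by simp only [List.length_append]; omega)]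
  congr 1
  simp only [hidx]

section Colex
variable [LinearOrder A]

/-- If `f` and `g` agree below `e` and differ at `e`, then `colexLe f g` forces `f e < g e`. -/
lemma colexLe_lt_at {f g : CStr A} {e : ℕ} (hag : ∀ m, m < e → f m = g m)
    (hne : f e ≠ g e) (hle : colexLe f g) : f e < g e := by
  rcases hle with ⟨e', h1, h2⟩ | rfl
  · rcases Nat.lt_trichotomy e' e with h | rfl | h
    · exact absurd (hag e' h) (ne_of_lt h2)
    · exact h2
    · exact absurd (h1 e h) hne
  · exact absurd rfl hne

lemma not_colexLe_of_lt_at {f g : CStr A} {e : ℕ} (hag : ∀ m, m < e → f m = g m)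
    (hlt : f e < g e) (hle : colexLe g f) : False := by
  have := colexLe_lt_at (fun m hm => (hag m hm).symm) (ne_of_gt hlt) hle
  exact absurd hlt (not_lt_of_gt this)

end Colex

lemma PDFA.δStar_append {Q : Type*} (M : PDFA A Q) (q : Q) (w1 w2 : List A) :
    M.δStar q (w1 ++ w2) = (M.δStar q w1).bind (fun r => M.δStar r w2) := by
  induction w1 generalizing q with
  | nil => simp [PDFA.δStar]
  | cons a w ih =>
    simp only [List.cons_append, PDFA.δStar]
    cases M.δ q a with
    | none => simp
    | some q' => simp [ih]

end Helpers

lemma CStr.ofList_take {A : Type*} (w : List A) (n m : ℕ) (hn : n ≤ w.length) (hm : m < n) :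
    CStr.ofList (w.take n) m = CStr.ofList w (m + (w.length - n)) := by
  have h1 : m < (w.take n).length := by simp; omega
  rw [CStr.ofList_eq_getElem _ _ h1, CStr.ofList_eq_getElem _ _ (by omega)]
  rw [List.getElem_take]
  congr 1
  have hidx : (List.take n w).length - 1 - m = w.length - 1 - (m + (w.length - n)) := by
    simp only [List.length_take]
    omega
  simp only [hidx]

section Helpers2

variable {A : Type*}

/-- `[ch (a+b-1), ..., ch (a+1), ch a]` : the word spelling positions `a+b-1 … a`. -/
def segList (ch : ℕ → A) (a : ℕ) : ℕ → List A
  | 0 => []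
  | b+1 => ch (a+b) :: segList ch a b

@[simp] lemma segList_length (ch : ℕ → A) (a b : ℕ) : (segList ch a b).length = b := by
  induction b with
  | zero => rfl
  | succ b ih => simp [segList, ih]

lemma ofList_segList (ch : ℕ → A) (a b m : ℕ) (h : m < b) :
    CStr.ofList (segList ch a b) m = (ch (a + m) : WithBot A) := by
  induction b with
  | zero => omega
  | succ b ih =>
    have hc : segList ch a (b+1) = [ch (a+b)] ++ segList ch a b := rfl
    rcases Nat.lt_or_ge m b with hm | hm
    · rw [hc, CStr.ofList_append_left _ _ _ (by simp; omega), ih hm]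
    · have hmb : m = b := by omega
      subst hmb
      rw [hc, CStr.ofList_append_right _ _ _ (by simp) (by simp)]
      simp only [segList_length, Nat.sub_self]
      rw [CStr.ofList_eq_getElem _ _ (by simp)]
      simp

/-- `n` copies of `c`, concatenated. -/
def repList (c : List A) : ℕ → List A
  | 0 => []
  | n+1 => c ++ repList c n

@[simp] lemma repList_length (c : List A) (n : ℕ) : (repList c n).length = n * c.length := by
  induction n with
  | zero => simp [repList]
  | succ n ih => simp [repList, ih]; ring

lemma ofList_repList (c : List A) (n m : ℕ) (h : m < n * c.length) :
    CStr.ofList (repList c n) m = CStr.ofList c (m % c.length) := by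
  induction n with
  | zero => omega
  | succ n ih =>
    have hc : repList c (n+1) = c ++ repList c n := rfl
    rcases Nat.lt_or_ge m (n * c.length) with hm | hm
    · rw [hc, CStr.ofList_append_left _ _ _ (by simp [hm]), ih hm]
    · have h2 : m < c.length + n * c.length := by
        have h' := h; rw [Nat.succ_mul, Nat.add_comm] at h'; exact h'
      rw [hc, CStr.ofList_append_right _ _ _ (by simp [hm]) (by simpa using h2)]
      simp only [repList_length]
      congr 1
      have hlt : m - n * c.length < c.length := by omega
      have hr : m = (m - n * c.length) + n * c.length := by omega
      have hmod : m % c.length = m - n * c.length := by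
        conv_lhs => rw [hr]
        rw [Nat.add_mul_mod_self_right]
        exact Nat.mod_eq_of_lt hlt
      exact hmod.symm

lemma run_segList {Q : Type*} (M : PDFA A Q) (ch : ℕ → A) (v : ℕ → Q)
    (hδ : ∀ t, M.δ (v (t+1)) (ch t) = some (v t)) (a b : ℕ) :
    M.δStar (v (a+b)) (segList ch a b) = some (v a) := by
  induction b with
  | zero => rfl
  | succ b ih =>
    show (M.δ (v (a+b+1)) (ch (a+b))).bind (fun q' => M.δStar q' (segList ch a b)) = some (v a)
    rw [hδ (a+b)]
    exact ih

/-- Dependent choice along `ℕ`. -/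
theorem nat_dc {α : Type*} (P : ℕ → α → Prop) (R : ℕ → α → α → Prop)
    (h0 : ∃ x, P 0 x) (hs : ∀ t x, P t x → ∃ y, P (t+1) y ∧ R t x y) :
    ∃ f : ℕ → α, (∀ t, P t (f t)) ∧ (∀ t, R t (f t) (f (t+1))) := by
  obtain ⟨x0, hx0⟩ := h0
  choose! g hg1 hg2 using hs
  refine ⟨fun t => Nat.rec x0 (fun t x => g t x) t, ?_, ?_⟩
  · intro t
    induction t with
    | zero => exact hx0
    | succ t ih => exact hg1 t _ ih
  · intro t
    have hP : ∀ s, P s (Nat.rec x0 (fun t x => g t x) s : α) := by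
      intro s
      induction s with
      | zero => exact hx0
      | succ s ih => exact hg1 s _ ih
    exact hg2 t _ (hP t)

/-- Pigeonhole: an infinite set of naturals mapping into a fintype has an infinite fiber. -/
lemma exists_infinite_fiber_set {Q : Type*} [Fintype Q] (K : Set ℕ) (hK : K.Infinite)
    (g : ℕ → Q) : ∃ v, {k ∈ K | g k = v}.Infinite := by
  by_contra hc
  push_neg at hc
  have : K ⊆ ⋃ v ∈ (Finset.univ : Finset Q), {k ∈ K | g k = v} := by
    intro k hk
    simp only [Set.mem_iUnion]
    exact ⟨g k, Finset.mem_univ _, hk, rfl⟩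
  exact hK (Set.Finite.subset (Set.Finite.biUnion (Finset.univ : Finset Q).finite_toSet
    (fun v _ => hc v)) this)

end Helpers2

section Approx

variable {A : Type*} [LinearOrder A] [Fintype A]

lemma approx_glb (S : Set (CStr A)) (γ : CStr A)
    (hS : ∀ f ∈ S, CStr.WF f) (hne : S.Nonempty)
    (h : IsColexGLB S γ) (hinf : ∀ m, γ m ≠ ⊥) (k : ℕ) :
    ∃ f ∈ S, ∀ m, m < k → f m = γ m := by
  classical
  have hWB : Finite (WithBot A) := by unfold WithBot; infer_instance
  induction k with
  | zero =>
    obtain ⟨f, hf⟩ := hne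
    exact ⟨f, hf, fun m hm => by omega⟩
  | succ k ih =>
    by_contra hc
    push_neg at hc
    obtain ⟨f₀, hf₀S, hf₀⟩ := ih
    set T : Set (CStr A) := {f ∈ S | ∀ m, m < k → f m = γ m} with hT
    have hf₀T : f₀ ∈ T := ⟨hf₀S, hf₀⟩
    have hTgt : ∀ f ∈ T, γ k < f k := by
      rintro f ⟨hfS, hfag⟩
      have hne' : γ k ≠ f k := by
        obtain ⟨m, hm, hnem⟩ := hc f hfS
        rcases Nat.lt_or_ge m k with h' | h'
        · exact absurd (hfag m h') hnem
        · have hmk : m = k := by omega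
          subst hmk
          exact fun he => hnem he.symm
      exact colexLe_lt_at (fun m hm => (hfag m hm).symm) hne' (h.2.1 f hfS)
    set V : Set (WithBot A) := (fun f => f k) '' T with hV
    obtain ⟨c, hcV, hcmin⟩ := Set.exists_min_image V id (Set.toFinite V) ⟨f₀ k, f₀, hf₀T, rfl⟩
    have hγc : γ k < c := by
      obtain ⟨f, hfT, rfl⟩ := hcV
      exact hTgt f hfT
    set H : CStr A := fun m => if m < k then γ m else if m = k then c else ⊥ with hH
    have hHk : H k = c := by simp [hH]
    have hHlt : ∀ m, m < k → H m = γ m := fun m hm => by simp [hH, hm]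
    have hHgt : ∀ m, k < m → H m = ⊥ := fun m hm => by
      simp only [hH]
      rw [if_neg (by omega), if_neg (by omega)]
    have hHwf : H.WF := by
      intro m hm
      have hkm : k < m := by
        rcases Nat.lt_trichotomy m k with h' | h' | h'
        · exact absurd ((hHlt m h') ▸ hm) (hinf m)
        · subst h'
          rw [hHk] at hm
          exact absurd hm (ne_of_gt (bot_le.trans_lt hγc))
        · exact h'
      exact hHgt _ (by omega)
    have hlow : ∀ f ∈ S, colexLe H f := by
      intro f hfS
      by_cases hfT : f ∈ T
      · have hfag := hfT.2
        have hck : c ≤ f k := hcmin (f k) ⟨f, hfT, rfl⟩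
        rcases lt_or_eq_of_le hck with hlt | heq
        · exact Or.inl ⟨k, fun m hm => (hHlt m hm).trans (hfag m hm).symm, hHk ▸ hlt⟩
        · by_cases hD : ∀ m, H m = f m
          · exact Or.inr (funext hD)
          · push_neg at hD
            have he0 : H (Nat.find hD) ≠ f (Nat.find hD) := Nat.find_spec hD
            have hmin : ∀ m, m < Nat.find hD → H m = f m :=
              fun m hm => not_not.mp (Nat.find_min hD hm)
            have he0k : k < Nat.find hD := by
              rcases Nat.lt_trichotomy (Nat.find hD) k with h' | h' | h'
              · exact absurd ((hHlt _ h').trans (hfag _ h').symm) he0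
              · rw [h'] at he0
                exact absurd (hHk.trans heq) he0
              · exact h'
            refine Or.inl ⟨Nat.find hD, hmin, ?_⟩
            rw [hHgt _ he0k]
            exact Ne.bot_lt (fun hb => he0 (((hHgt _ he0k)).trans hb.symm))
      · have hex2 : ∃ m, f m ≠ γ m := by
          by_contra h'
          push_neg at h'
          exact hfT ⟨hfS, fun m _ => h' m⟩
        have heK : Nat.find hex2 < k := by
          by_contra h'
          push_neg at h'
          exact hfT ⟨hfS, fun m hm => not_not.mp (Nat.find_min hex2 (by omega))⟩
        have hagree : ∀ m, m < Nat.find hex2 → γ m = f m :=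
          fun m hm => (not_not.mp (Nat.find_min hex2 hm)).symm
        have hglt : γ (Nat.find hex2) < f (Nat.find hex2) :=
          colexLe_lt_at hagree (fun hgm => (Nat.find_spec hex2) hgm.symm) (h.2.1 f hfS)
        exact Or.inl ⟨Nat.find hex2,
          fun m hm => (hHlt m (by omega)).trans (hagree m hm),
          by rw [hHlt _ heK]; exact hglt⟩
    exact not_colexLe_of_lt_at (fun m hm => (hHlt m hm).symm) (hHk ▸ hγc)
      (h.2.2 H hHwf hlow)

lemma approx_lub (S : Set (CStr A)) (γ : CStr A)
    (hS : ∀ f ∈ S, CStr.WF f) (hSfin : ∀ f ∈ S, CStr.Finite f) (hne : S.Nonempty)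
    (h : IsColexLUB S γ) (hinf : ∀ m, γ m ≠ ⊥) (k : ℕ) :
    ∃ f ∈ S, ∀ m, m < k → f m = γ m := by
  classical
  have hWB : Finite (WithBot A) := by unfold WithBot; infer_instance
  have hAne : Nonempty A := by
    cases hγ0 : γ 0 with
    | bot => exact absurd hγ0 (hinf 0)
    | coe a => exact ⟨a⟩
  obtain ⟨tp, htp⟩ := Finite.exists_max (id : A → A)
  have hletop : ∀ x : WithBot A, x ≤ (tp : WithBot A) := by
    intro x
    cases x with
    | bot => exact bot_le
    | coe a => exact WithBot.coe_le_coe.mpr (htp a)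
  induction k with
  | zero =>
    obtain ⟨f, hf⟩ := hne
    exact ⟨f, hf, fun m hm => by omega⟩
  | succ k ih =>
    by_contra hc
    push_neg at hc
    obtain ⟨f₀, hf₀S, hf₀⟩ := ih
    set T : Set (CStr A) := {f ∈ S | ∀ m, m < k → f m = γ m} with hT
    have hf₀T : f₀ ∈ T := ⟨hf₀S, hf₀⟩
    have hTlt : ∀ f ∈ T, f k < γ k := by
      rintro f ⟨hfS, hfag⟩
      have hne' : f k ≠ γ k := by
        obtain ⟨m, hm, hnem⟩ := hc f hfS
        rcases Nat.lt_or_ge m k with h' | h'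
        · exact absurd (hfag m h') hnem
        · have hmk : m = k := by omega
          subst hmk
          exact hnem
      exact colexLe_lt_at hfag hne' (h.2.1 f hfS)
    set V : Set (WithBot A) := (fun f => f k) '' T with hV
    obtain ⟨c, hcV, hcmax⟩ := Set.exists_max_image V id (Set.toFinite V) ⟨f₀ k, f₀, hf₀T, rfl⟩
    have hγc : c < γ k := by
      obtain ⟨f, hfT, rfl⟩ := hcV
      exact hTlt f hfT
    -- key: construct an upper bound H smaller than γ
    by_cases hcb : c = ⊥
    · set H : CStr A := fun m => if m < k then γ m else ⊥ with hH
      have hHlt : ∀ m, m < k → H m = γ m := fun m hm => by simp [hH, hm]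
      have hHge : ∀ m, k ≤ m → H m = ⊥ := fun m hm => by
        simp only [hH]; rw [if_neg (by omega)]
      have hHwf : H.WF := by
        intro m hm
        have hkm : k ≤ m := by
          by_contra h'
          push_neg at h'
          exact absurd ((hHlt m h') ▸ hm) (hinf m)
        exact hHge _ (by omega)
      have hup : ∀ f ∈ S, colexLe f H := by
        intro f hfS
        by_cases hfT : f ∈ T
        · have hfk : f k = ⊥ := by
            have := hcmax (f k) ⟨f, hfT, rfl⟩
            rw [hcb] at this
            exact le_bot_iff.mp this
          refine Or.inr (funext fun m => ?_)
          rcases Nat.lt_or_ge m k with hm | hm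
          · rw [hfT.2 m hm, hHlt m hm]
          · rw [CStr.wf_bot_mono (hS f hfS) hfk hm, hHge m hm]
        · have hex2 : ∃ m, f m ≠ γ m := by
            by_contra h'
            push_neg at h'
            exact hfT ⟨hfS, fun m _ => h' m⟩
          have heK : Nat.find hex2 < k := by
            by_contra h'
            push_neg at h'
            exact hfT ⟨hfS, fun m hm => not_not.mp (Nat.find_min hex2 (by omega))⟩
          have hagree : ∀ m, m < Nat.find hex2 → f m = γ m :=
            fun m hm => not_not.mp (Nat.find_min hex2 hm)
          have hflt : f (Nat.find hex2) < γ (Nat.find hex2) :=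
            colexLe_lt_at hagree (Nat.find_spec hex2) (h.2.1 f hfS)
          exact Or.inl ⟨Nat.find hex2,
            fun m hm => (hagree m hm).trans (hHlt m (by omega)).symm,
            by rw [hHlt _ heK]; exact hflt⟩
      exact not_colexLe_of_lt_at (fun m hm => hHlt m hm) (by rw [hHge k le_rfl]; exact Ne.bot_lt (hinf k))
        (h.2.2 H hHwf hup)
    · set H : CStr A := fun m => if m < k then γ m else if m = k then c else (tp : WithBot A) with hH
      have hHk : H k = c := by simp [hH]
      have hHlt : ∀ m, m < k → H m = γ m := fun m hm => by simp [hH, hm]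
      have hHgt : ∀ m, k < m → H m = (tp : WithBot A) := fun m hm => by
        simp only [hH]; rw [if_neg (by omega), if_neg (by omega)]
      have hHnb : ∀ m, H m ≠ ⊥ := by
        intro m
        rcases Nat.lt_trichotomy m k with h' | h' | h'
        · rw [hHlt m h']; exact hinf m
        · rw [h', hHk]; exact hcb
        · rw [hHgt m h']; exact WithBot.coe_ne_bot
      have hHwf : H.WF := fun m hm => absurd hm (hHnb m)
      have hup : ∀ f ∈ S, colexLe f H := by
        intro f hfS
        by_cases hfT : f ∈ T
        · have hck : f k ≤ c := hcmax (f k) ⟨f, hfT, rfl⟩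
          rcases lt_or_eq_of_le hck with hlt | heq
          · exact Or.inl ⟨k, fun m hm => (hfT.2 m hm).trans (hHlt m hm).symm, hHk ▸ hlt⟩
          · have hex : ∃ m, f m ≠ H m := by
              obtain ⟨mf, hmf⟩ := hSfin f hfS
              exact ⟨mf, fun hfm => hHnb mf (hfm ▸ hmf)⟩
            have he0 : f (Nat.find hex) ≠ H (Nat.find hex) := Nat.find_spec hex
            have hmin : ∀ m, m < Nat.find hex → f m = H m :=
              fun m hm => not_not.mp (Nat.find_min hex hm)
            have he0k : k < Nat.find hex := by
              rcases Nat.lt_trichotomy (Nat.find hex) k with h' | h' | h'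
              · exact absurd ((hfT.2 _ h').trans (hHlt _ h').symm) he0
              · rw [h'] at he0
                exact absurd (heq.trans hHk.symm) he0
              · exact h'
            refine Or.inl ⟨Nat.find hex, hmin, ?_⟩
            rw [hHgt _ he0k]
            exact lt_of_le_of_ne (hletop _) (fun hb => he0 (hb.trans (hHgt _ he0k).symm))
        · have hex2 : ∃ m, f m ≠ γ m := by
            by_contra h'
            push_neg at h'
            exact hfT ⟨hfS, fun m _ => h' m⟩
          have heK : Nat.find hex2 < k := by
            by_contra h'
            push_neg at h'
            exact hfT ⟨hfS, fun m hm => not_not.mp (Nat.find_min hex2 (by omega))⟩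
          have hagree : ∀ m, m < Nat.find hex2 → f m = γ m :=
            fun m hm => not_not.mp (Nat.find_min hex2 hm)
          have hflt : f (Nat.find hex2) < γ (Nat.find hex2) :=
            colexLe_lt_at hagree (Nat.find_spec hex2) (h.2.1 f hfS)
          exact Or.inl ⟨Nat.find hex2,
            fun m hm => (hagree m hm).trans (hHlt m (by omega)).symm,
            by rw [hHlt _ heK]; exact hflt⟩
      exact not_colexLe_of_lt_at (fun m hm => hHlt m hm) (hHk ▸ hγc)
        (h.2.2 H hHwf hup)

end Approx


/-- Let `γ ∈ {inf I_u, sup I_u}` for a state `u` of a DFA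
whose initial state has no incoming transitions and all of whose states are
reachable.  If `γ` has infinite length, then `γ = β^ω α` for some finite
strings `α, β ∈ Σ*` with `|α| + |β| < |Q|`. -/
theorem infinite_infimum_supremum_is_ultimately_periodic
    {A Q : Type*} [LinearOrder A] [Fintype A] [Fintype Q]
    (M : PDFA A Q) (hstart : M.NoIncomingStart) (hreach : M.Reachable)
    (u : Q) (γ : CStr A)
    (hγ : IsColexGLB (CStr.ofList '' M.I u) γ ∨ IsColexLUB (CStr.ofList '' M.I u) γ)
    (hinf : ¬ γ.Finite) :
    ∃ α β : List A, β ≠ [] ∧ α.length + β.length < Fintype.card Q ∧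
      γ = CStr.omegaAppend β α := by
  classical
  have hinf' : ∀ m, γ m ≠ ⊥ := fun m hm => hinf ⟨m, hm⟩
  have hchh : ∀ m, ∃ a : A, γ m = (a : WithBot A) := by
    intro m
    cases hm : γ m with
    | bot => exact absurd hm (hinf' m)
    | coe a => exact ⟨a, rfl⟩
  choose ch hch using hchh
  set S := CStr.ofList '' M.I u with hSdef
  have hSwf : ∀ f ∈ S, CStr.WF f := by rintro f ⟨w, _, rfl⟩; exact CStr.ofList_wf w
  have hSfin : ∀ f ∈ S, CStr.Finite f := by rintro f ⟨w, _, rfl⟩; exact CStr.ofList_finite w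
  have hSne : S.Nonempty := by
    obtain ⟨w, hw⟩ := hreach u
    exact ⟨CStr.ofList w, w, hw, rfl⟩
  have hap : ∀ k, ∃ w ∈ M.I u, ∀ m, m < k → CStr.ofList w m = γ m := by
    intro k
    rcases hγ with hg | hg
    · obtain ⟨f, ⟨w, hwI, rfl⟩, hf⟩ := approx_glb S γ hSwf hSne hg hinf' k
      exact ⟨w, hwI, hf⟩
    · obtain ⟨f, ⟨w, hwI, rfl⟩, hf⟩ := approx_lub S γ hSwf hSfin hSne hg hinf' k
      exact ⟨w, hwI, hf⟩
  choose wα hwI hwγ using hap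
  have hwI' : ∀ k, M.δStar M.start (wα k) = some u := fun k => hwI k
  have hlen : ∀ k, k ≤ (wα k).length := by
    intro k
    by_contra h'
    push_neg at h'
    have hb : CStr.ofList (wα k) ((wα k).length) = ⊥ := (CStr.ofList_eq_bot_iff _ _).mpr le_rfl
    exact hinf' _ ((hwγ k _ h').symm.trans hb)
  -- the state reached after reading all but the last `t` characters of `wα k`
  set O : ℕ → ℕ → Option Q := fun k t => M.δStar M.start ((wα k).take ((wα k).length - t))
    with hO
  have hOsome : ∀ k n, ∃ v, M.δStar M.start ((wα k).take n) = some v := by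
    intro k n
    have hsplit := M.δStar_append M.start ((wα k).take n) ((wα k).drop n)
    rw [List.take_append_drop, hwI' k] at hsplit
    rcases hx : M.δStar M.start ((wα k).take n) with _ | v
    · rw [hx] at hsplit
      simp at hsplit
    · exact ⟨v, rfl⟩
  have hOstep : ∀ k t, t < k →
      O k t = (O k (t+1)).bind (fun r => M.δ r (ch t)) := by
    intro k t htk
    have hlk := hlen k
    simp only [hO]
    have h1 : (wα k).length - t = ((wα k).length - (t+1)) + 1 := by omega
    rw [h1, List.take_succ]
    have hidx : (wα k).length - (t+1) < (wα k).length := by omega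
    rw [List.getElem?_eq_getElem hidx]
    have hchar : ((wα k)[(wα k).length - (t+1)] : A) = ch t := by
      have h2 := CStr.ofList_eq_getElem (wα k) t (by omega)
      rw [hwγ k t htk, hch t] at h2
      have h3 : (wα k).length - 1 - t = (wα k).length - (t+1) := by omega
      simp only [h3] at h2
      exact (WithBot.coe_inj.mp h2).symm
    rw [Option.toList_some, hchar, M.δStar_append]
    congr 1
    funext r
    show (M.δ r (ch t)).bind (fun q' => M.δStar q' []) = M.δ r (ch t)
    cases M.δ r (ch t) <;> rfl
  -- König-style extraction of an infinite backward path
  have h0 : (fun (t : ℕ) (x : Q × Set ℕ) =>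
      x.2.Infinite ∧ ∀ k ∈ x.2, t ≤ k ∧ O k t = some x.1) 0 (u, Set.univ) := by
    refine ⟨Set.infinite_univ, fun k _ => ⟨Nat.zero_le k, ?_⟩⟩
    simp only [hO]
    rw [Nat.sub_zero, List.take_length]
    exact hwI' k
  have hstep : ∀ t (x : Q × Set ℕ),
      (x.2.Infinite ∧ ∀ k ∈ x.2, t ≤ k ∧ O k t = some x.1) →
      ∃ y : Q × Set ℕ, ((y.2.Infinite ∧ ∀ k ∈ y.2, t + 1 ≤ k ∧ O k (t+1) = some y.1)
        ∧ y.2 ⊆ x.2) := by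
    rintro t ⟨vv, K⟩ ⟨hKinf, hKprop⟩
    have hK1inf : {k ∈ K | t + 1 ≤ k}.Infinite := by
      have hsub : K \ Set.Iio (t+1) ⊆ {k ∈ K | t + 1 ≤ k} := by
        rintro k ⟨hk1, hk2⟩
        exact ⟨hk1, by simpa using hk2⟩
      exact (hKinf.diff (Set.finite_Iio (t+1))).mono hsub
    obtain ⟨v', hv'⟩ := exists_infinite_fiber_set _ hK1inf (fun k => (O k (t+1)).getD u)
    refine ⟨(v', {k ∈ {k ∈ K | t + 1 ≤ k} | (O k (t+1)).getD u = v'}), ⟨hv', ?_⟩,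
      fun k hk => hk.1.1⟩
    rintro k ⟨⟨hkK, hkt⟩, hgk⟩
    refine ⟨hkt, ?_⟩
    obtain ⟨w', hw'⟩ := hOsome k ((wα k).length - (t+1))
    have hOk : O k (t+1) = some w' := hw'
    rw [hOk]
    rw [hOk] at hgk
    simp only [Option.getD_some] at hgk
    rw [hgk]
  obtain ⟨F, hF1, hF2⟩ := nat_dc
    (fun (t : ℕ) (x : Q × Set ℕ) => x.2.Infinite ∧ ∀ k ∈ x.2, t ≤ k ∧ O k t = some x.1)
    (fun _ x y => y.2 ⊆ x.2) ⟨(u, Set.univ), h0⟩ hstep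
  set v : ℕ → Q := fun t => (F t).1 with hv
  set K : ℕ → Set ℕ := fun t => (F t).2 with hK
  have hKsub : ∀ t1 t2, t1 ≤ t2 → K t2 ⊆ K t1 := by
    intro t1 t2 h
    induction t2, h using Nat.le_induction with
    | base => exact fun k hk => hk
    | succ t2 h ih => exact fun k hk => ih (hF2 t2 hk)
  have hδv : ∀ t, M.δ (v (t+1)) (ch t) = some (v t) := by
    intro t
    obtain ⟨k, hk⟩ := (hF1 (t+1)).1.nonempty
    have hk' : k ∈ K t := hF2 t hk
    have h1 := (hF1 (t+1)).2 k hk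
    have h2 := (hF1 t).2 k hk'
    have h3 := hOstep k t (by omega)
    rw [h2.2, h1.2, Option.bind_some] at h3
    exact h3.symm
  have hvs : ∀ t, v t ≠ M.start := fun t ht => hstart (v (t+1)) (ch t) (ht ▸ hδv t)
  have hv0 : v 0 = u := by
    obtain ⟨k, hk⟩ := (hF1 0).1.nonempty
    have h1 := ((hF1 0).2 k hk).2
    have h2 : O k 0 = some u := by
      simp only [hO]
      rw [Nat.sub_zero, List.take_length]
      exact hwI' k
    rw [h1] at h2
    exact Option.some_inj.mp h2
  -- pigeonhole: the path revisits a state within the first `card Q` steps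
  have hcard : Fintype.card {q : Q // q ≠ M.start} < Fintype.card Q :=
    Fintype.card_subtype_lt (x := M.start) (by simp)
  obtain ⟨i', j', hij', hveq⟩ := Fintype.exists_ne_map_eq_of_card_lt
    (fun t : Fin (Fintype.card Q) => (⟨v t, hvs t⟩ : {q : Q // q ≠ M.start}))
    (by simpa using hcard)
  have hvv : v i'.val = v j'.val := congrArg Subtype.val hveq
  obtain ⟨i, j, hij, hjcard, hvij⟩ : ∃ i j : ℕ, i < j ∧ j < Fintype.card Q ∧ v i = v j := by
    rcases lt_or_gt_of_ne (fun h : (i' : ℕ) = (j' : ℕ) => hij' (Fin.ext h)) with hlt | hgt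
    · exact ⟨i'.val, j'.val, hlt, j'.isLt, hvv⟩
    · exact ⟨j'.val, i'.val, hgt, i'.isLt, hvv.symm⟩
  set p := j - i with hp'
  have hp : 0 < p := by omega
  have hipj : i + p = j := by omega
  -- the runs
  have hrun_s : M.δStar (v i) (segList ch 0 i) = some u := by
    have h1 := run_segList M ch v hδv 0 i
    rw [Nat.zero_add, hv0] at h1
    exact h1
  have hrun_c : M.δStar (v i) (segList ch i p) = some (v i) := by
    have h1 := run_segList M ch v hδv i p
    rw [hipj, ← hvij] at h1
    exact h1
  have hrun_rep : ∀ n, M.δStar (v i) (repList (segList ch i p) n) = some (v i) := by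
    intro n
    induction n with
    | zero => rfl
    | succ n ih =>
      show M.δStar (v i) (segList ch i p ++ repList (segList ch i p) n) = some (v i)
      rw [M.δStar_append, hrun_c, Option.bind_some, ih]
  obtain ⟨w0, hw0⟩ := hreach (v i)
  have hx : ∀ n, M.δStar M.start (w0 ++ (repList (segList ch i p) n ++ segList ch 0 i))
      = some u := by
    intro n
    rw [M.δStar_append, hw0, Option.bind_some, M.δStar_append, hrun_rep n, Option.bind_some,
      hrun_s]
  -- the candidate ultimately periodic string
  set η : CStr A := CStr.omegaAppend (segList ch i p) (segList ch 0 i) with hη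
  have hηlow : ∀ m, m < i → η m = γ m := by
    intro m hm
    show CStr.omegaAppend _ _ m = γ m
    unfold CStr.omegaAppend
    rw [if_pos (by simpa using hm), ofList_segList ch 0 i m hm, Nat.zero_add]
    exact (hch m).symm
  have hηhigh : ∀ m, i ≤ m → η m = (ch (i + (m - i) % p) : WithBot A) := by
    intro m hm
    show CStr.omegaAppend _ _ m = _
    unfold CStr.omegaAppend
    rw [if_neg (by simp; omega)]
    simp only [segList_length]
    exact ofList_segList ch i p _ (Nat.mod_lt _ hp)
  have hηper : ∀ m, i ≤ m → η (m + p) = η m := by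
    intro m hm
    rw [hηhigh m hm, hηhigh (m+p) (by omega)]
    have h1 : m + p - i = (m - i) + p := by omega
    rw [h1, Nat.add_mod_right]
  -- main claim
  have hmain : γ = η := by
    by_contra hne
    have hD : ∃ m, γ m ≠ η m := by
      by_contra h'
      push_neg at h'
      exact hne (funext h')
    have hdneq : γ (Nat.find hD) ≠ η (Nat.find hD) := Nat.find_spec hD
    set d := Nat.find hD with hd
    have hdmin : ∀ m, m < d → γ m = η m := fun m hm => not_not.mp (Nat.find_min hD hm)
    have hdj : j ≤ d := by
      by_contra h'
      push_neg at h'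
      rcases Nat.lt_or_ge d i with h2 | h2
      · exact hdneq (hηlow d h2).symm
      · have he : η d = (ch d : WithBot A) := by
          rw [hηhigh d h2, Nat.mod_eq_of_lt (show d - i < p by omega),
            show i + (d - i) = d by omega]
        exact hdneq (by rw [he, hch d])
    have hid : i ≤ d - p := by omega
    -- the pumped word
    set N := d + 1 with hN
    have hxlen : d < i + N * p := by
      have h1 : N ≤ N * p := Nat.le_mul_of_pos_right N hp
      omega
    set xw := w0 ++ (repList (segList ch i p) N ++ segList ch 0 i) with hxw
    have hxmem : CStr.ofList xw ∈ S := ⟨xw, hx N, rfl⟩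
    have hxval_low : ∀ m, m < i → CStr.ofList xw m = γ m := by
      intro m hm
      rw [hxw, CStr.ofList_append_left _ _ _ (by simp; omega),
        CStr.ofList_append_left _ _ _ (by simpa using hm),
        ofList_segList ch 0 i m hm, Nat.zero_add]
      exact (hch m).symm
    have hxval_mid : ∀ m, i ≤ m → m < i + N * p → CStr.ofList xw m = η m := by
      intro m hm1 hm2
      rw [hxw, CStr.ofList_append_left _ _ _ (by simp; omega),
        CStr.ofList_append_right _ _ _ (by simpa using hm1) (by simp; omega)]
      simp only [segList_length]
      rw [ofList_repList _ _ _ (by simp; omega)]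
      simp only [segList_length]
      rw [ofList_segList ch i p _ (Nat.mod_lt _ hp), hηhigh m hm1]
    have hxd : CStr.ofList xw d = η d := hxval_mid d (by omega) hxlen
    have hagree_xd : ∀ m, m < d → CStr.ofList xw m = γ m := by
      intro m hm
      rcases Nat.lt_or_ge m i with h2 | h2
      · exact hxval_low m h2
      · exact (hxval_mid m h2 (by omega)).trans (hdmin m hm).symm
    -- the cycle-removal word
    obtain ⟨k, hkK⟩ := (hF1 (d+1)).1.nonempty
    have hkd : d + 1 ≤ k := ((hF1 (d+1)).2 k hkK).1
    have hOkj : O k j = some (v j) := ((hF1 j).2 k (hKsub j (d+1) (by omega) hkK)).2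
    simp only [hO] at hOkj
    have hlenk := hlen k
    set yw := (wα k).take ((wα k).length - j) ++ segList ch 0 i with hyw
    have hymem : CStr.ofList yw ∈ S := by
      refine ⟨yw, ?_, rfl⟩
      show M.δStar M.start yw = some u
      rw [hyw, M.δStar_append, hOkj, Option.bind_some, ← hvij, hrun_s]
    have hyval_low : ∀ m, m < i → CStr.ofList yw m = γ m := by
      intro m hm
      rw [hyw, CStr.ofList_append_left _ _ _ (by simpa using hm),
        ofList_segList ch 0 i m hm, Nat.zero_add]
      exact (hch m).symm
    have hyval_high : ∀ m, i ≤ m → m + p ≤ d → CStr.ofList yw m = γ (m + p) := by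
      intro m hm1 hm2
      rw [hyw, CStr.ofList_append_right _ _ _ (by simpa using hm1)
        (by simp [List.length_take]; omega)]
      simp only [segList_length]
      rw [CStr.ofList_take _ _ _ (by omega) (by omega)]
      have hidx : m - i + ((wα k).length - ((wα k).length - j)) = m + p := by omega
      rw [hidx]
      exact hwγ k (m + p) (by omega)
    have hyagree : ∀ m, m < d - p → CStr.ofList yw m = γ m := by
      intro m hm
      rcases Nat.lt_or_ge m i with h2 | h2
      · exact hyval_low m h2
      · rw [hyval_high m h2 (by omega), hdmin (m+p) (by omega), hηper m h2,
          ← hdmin m (by omega)]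
    have hyd : CStr.ofList yw (d - p) = γ d := by
      rw [hyval_high (d-p) hid (by omega), show d - p + p = d by omega]
    have hγdp : γ (d - p) = η d := by
      have h1 := hηper (d-p) hid
      rw [show d - p + p = d by omega] at h1
      rw [hdmin (d-p) (by omega)]
      exact h1.symm
    rcases hγ with hg | hg
    · -- infimum case: γ ≤ pumped word gives γ d < η d
      have h1 : γ d < CStr.ofList xw d :=
        colexLe_lt_at (fun m hm => (hagree_xd m hm).symm)
          (by rw [hxd]; exact hdneq) (hg.2.1 _ hxmem)
      rw [hxd] at h1
      exact not_colexLe_of_lt_at (f := CStr.ofList yw) (g := γ) (e := d - p) hyagree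
        (by rw [hyd, hγdp]; exact h1) (hg.2.1 _ hymem)
    · -- supremum case: pumped word ≤ γ gives η d < γ d
      have h1 : CStr.ofList xw d < γ d :=
        colexLe_lt_at hagree_xd (by rw [hxd]; exact fun h => hdneq h.symm) (hg.2.1 _ hxmem)
      rw [hxd] at h1
      exact not_colexLe_of_lt_at (f := γ) (g := CStr.ofList yw) (e := d - p)
        (fun m hm => (hyagree m hm).symm)
        (by rw [hyd, hγdp]; exact h1) (hg.2.1 _ hymem)
  exact ⟨segList ch 0 i, segList ch i p, by
      intro h'
      have := congrArg List.length h'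
      simp at this
      omega,
    by simp only [segList_length]; omega, hmain⟩
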